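/- arXiv:1411.7213 — 2 statements merged into one kernel-verified Lean document; each statement's English description precedes it below -/
import Mathlib

section
/- For fixed a ∈ ℝ and m_r > 0, the function p ↦ [a²/(|p|²+m_r²)² + 1/(a²+|p|²+m_r²) − 1/(|p|²+m_r²)] is Lebesgue integrable on ℝ⁴, even though each of the three summands separately is not integrable on ℝ⁴. -/
/-!
Writing `s = ‖p‖² + m_r²`, the three summands combine to `a⁴ / (s² (a² + s))`, which is
`O(‖p‖⁻⁶)` and hence integrable on `ℝ⁴`, whereas each summand decays only like `‖p‖⁻⁴`
or `‖p‖⁻²`. In polar coordinates `(‖x‖² + c)⁻ᵏ` is integrable on an `n`-dimensional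
space exactly when `∫^∞ yⁿ⁻¹ y⁻²ᵏ dy` converges, i.e. when `n < 2k`.
-/

open MeasureTheory Set Module

lemma not_integrableOn_Ioi_pow_mul_inv_sq_add_pow (c : ℝ) {m k : ℕ} (hk : 2 * k ≤ m + 1) :
    ¬ IntegrableOn (fun y : ℝ => y ^ m * ((y ^ 2 + c) ^ k)⁻¹) (Ioi 0) := by
  set R := 1 + |c|
  have hR : 0 ≤ R := by positivity
  intro h
  refine not_integrableOn_Ioi_inv (a := R) <|
    ((h.mono_set (Ioi_subset_Ioi hR)).const_mul (2 ^ k)).mono' (by fun_prop) ?_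
  filter_upwards [ae_restrict_mem measurableSet_Ioi] with y (hy : R < y)
  have hy1 : 1 ≤ y := by linarith [abs_nonneg c]
  have hcy : |c| < y ^ 2 := by nlinarith
  have hpos : 0 < y ^ 2 + c := by linarith [neg_abs_le c]
  have hbound : (y ^ 2 + c) ^ k ≤ 2 ^ k * (y ^ m * y) :=
    calc (y ^ 2 + c) ^ k ≤ (2 * y ^ 2) ^ k := by
          gcongr
          linarith [le_abs_self c]
      _ = 2 ^ k * y ^ (2 * k) := by ring
      _ ≤ 2 ^ k * y ^ (m + 1) := by gcongr
      _ = 2 ^ k * (y ^ m * y) := by ring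
  rw [Real.norm_of_nonneg (by positivity), ← mul_assoc, ← div_eq_mul_inv,
    le_div_iff₀ (by positivity), inv_mul_le_iff₀ (by positivity)]
  linarith

section Radial

variable {E : Type*} [NormedAddCommGroup E] [NormedSpace ℝ E] [FiniteDimensional ℝ E]
  [MeasurableSpace E] [BorelSpace E] (μ : Measure E) [μ.IsAddHaarMeasure]

lemma integrable_inv_norm_sq_add_pow {c : ℝ} (hc : 0 < c) {k : ℕ} (hk : finrank ℝ E < 2 * k) :
    Integrable (fun x : E => ((‖x‖ ^ 2 + c) ^ k)⁻¹) μ := by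
  set d := min 1 c
  have hd : 0 < d := lt_min one_pos hc
  have hbracket := integrable_rpow_neg_one_add_norm_sq (μ := μ) (r := 2 * k) (by exact_mod_cast hk)
  refine (hbracket.const_mul (d ^ k)⁻¹).mono' (by fun_prop) (ae_of_all _ fun x => ?_)
  have hle : d * (1 + ‖x‖ ^ 2) ≤ ‖x‖ ^ 2 + c := by
    nlinarith [min_le_left 1 c, min_le_right 1 c, sq_nonneg ‖x‖]
  rw [Real.norm_of_nonneg (by positivity), neg_div, mul_div_cancel_left₀ _ two_ne_zero,
    Real.rpow_neg (by positivity), Real.rpow_natCast, ← mul_inv, ← mul_pow]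
  gcongr

lemma not_integrable_inv_norm_sq_add_pow [Nontrivial E] (c : ℝ) {k : ℕ}
    (hk : 2 * k ≤ finrank ℝ E) : ¬ Integrable (fun x : E => ((‖x‖ ^ 2 + c) ^ k)⁻¹) μ := by
  have hE : 0 < finrank ℝ E := finrank_pos
  rw [integrable_fun_norm_addHaar μ (f := fun y => ((y ^ 2 + c) ^ k)⁻¹)]
  exact not_integrableOn_Ioi_pow_mul_inv_sq_add_pow c (by omega)

end Radial

lemma abs_sq_div_sq_add_one_div_add_sub_one_div_le (a : ℝ) {s : ℝ} (hs : 0 < s) :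
    |a ^ 2 / s ^ 2 + 1 / (a ^ 2 + s) - 1 / s| ≤ a ^ 4 * (s ^ 3)⁻¹ := by
  have hcombine : a ^ 2 / s ^ 2 + 1 / (a ^ 2 + s) - 1 / s = a ^ 4 / (s ^ 2 * (a ^ 2 + s)) := by
    field_simp
    ring
  rw [hcombine, abs_of_nonneg (by positivity), ← div_eq_mul_inv]
  exact div_le_div_of_nonneg_left (by positivity) (by positivity) (by nlinarith [sq_nonneg a])

/-- For fixed `a ∈ ℝ` and `m_r > 0`, the function
`p ↦ a²/(|p|²+m_r²)² + 1/(a²+|p|²+m_r²) − 1/(|p|²+m_r²)` is Lebesgue integrable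
on `ℝ⁴`, even though each of the three summands separately is not integrable
(the first one provided `a ≠ 0`). -/
theorem combined_integrand_integrable (a mr : ℝ) (hm : 0 < mr) :
    Integrable (fun p : EuclideanSpace ℝ (Fin 4) =>
      a ^ 2 / (‖p‖ ^ 2 + mr ^ 2) ^ 2 + 1 / (a ^ 2 + ‖p‖ ^ 2 + mr ^ 2)
        - 1 / (‖p‖ ^ 2 + mr ^ 2)) ∧
    (a ≠ 0 → ¬ Integrable (fun p : EuclideanSpace ℝ (Fin 4) =>
      a ^ 2 / (‖p‖ ^ 2 + mr ^ 2) ^ 2)) ∧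
    ¬ Integrable (fun p : EuclideanSpace ℝ (Fin 4) =>
      1 / (a ^ 2 + ‖p‖ ^ 2 + mr ^ 2)) ∧
    ¬ Integrable (fun p : EuclideanSpace ℝ (Fin 4) =>
      1 / (‖p‖ ^ 2 + mr ^ 2)) := by
  have hmr : 0 < mr ^ 2 := by positivity
  refine ⟨?_, fun ha => ?_, ?_, ?_⟩
  · refine ((integrable_inv_norm_sq_add_pow volume hmr (k := 3) (by simp)).const_mul
      (a ^ 4)).mono' (by fun_prop (disch := positivity)) (ae_of_all _ fun p => ?_)
    rw [Real.norm_eq_abs, add_assoc (a ^ 2)]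
    exact abs_sq_div_sq_add_one_div_add_sub_one_div_le a (by positivity)
  · simp_rw [div_eq_mul_inv, integrable_const_mul_iff (pow_ne_zero 2 ha).isUnit]
    exact not_integrable_inv_norm_sq_add_pow volume _ (k := 2) (by simp)
  · refine fun h => not_integrable_inv_norm_sq_add_pow volume (a ^ 2 + mr ^ 2) (k := 1)
      (by simp) (h.congr (ae_of_all _ fun p => ?_))
    ring
  · refine fun h => not_integrable_inv_norm_sq_add_pow volume (mr ^ 2) (k := 1) (by simp)
      (h.congr (ae_of_all _ fun p => ?_))
    ring
end

section
/- For fixed a ∈ ℝ and m_r > 0, one has the identity ∫_{ℝ⁴} [a²/(|p|²+m_r²)² + 1/(a²+|p|²+m_r²) − 1/(|p|²+m_r²)] dp = ∫_0^{a²} dt (a²−t) ∫_{ℝ⁴} dp · d²/dt² [1/(m_r²+t+|p|²)], where d²/dt² [1/(m_r²+t+|p|²)] = 2/(m_r²+t+|p|²)³. -/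
/-!
With `c = |p|² + m_r²` and `f t = (c + t)⁻¹`, the integrand on the left is
`f a² - f 0 - a² f' 0`, which Taylor's formula with integral remainder writes as
`∫_0^{a²} (a² - t) f'' t dt`. Since `0 ≤ f'' t ≤ 2 / (m_r² + |p|²)³` and the latter is integrable
on `ℝ⁴` (its decay exponent `6` exceeds the dimension), Fubini's theorem exchanges the two
integrals.
-/

open MeasureTheory Set

section Integrability

variable {E : Type*} [NormedAddCommGroup E] [InnerProductSpace ℝ E] [FiniteDimensional ℝ E]
  [MeasurableSpace E] [BorelSpace E] {μ : Measure E} [μ.IsAddHaarMeasure]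

lemma integrable_inv_const_add_norm_sq_pow {c : ℝ} (hc : 0 < c) {n : ℕ}
    (hn : Module.finrank ℝ E < 2 * n) :
    Integrable (fun p : E => ((c + ‖p‖ ^ 2) ^ n)⁻¹) μ := by
  have hbracket : Integrable (fun p : E => ((1 + ‖p‖ ^ 2) ^ n)⁻¹) μ := by
    refine (integrable_rpow_neg_one_add_norm_sq (μ := μ) (r := 2 * n) (by exact_mod_cast hn)).congr
      (Filter.Eventually.of_forall fun p => ?_)
    dsimp only
    rw [show -(2 * n : ℝ) / 2 = -(n : ℝ) by ring, Real.rpow_neg (by positivity),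
      Real.rpow_natCast]
  have hle (p : E) : ((c + ‖p‖ ^ 2) ^ n)⁻¹ ≤ (min c 1 ^ n)⁻¹ * ((1 + ‖p‖ ^ 2) ^ n)⁻¹ := by
    have hm : 0 < min c 1 := lt_min hc one_pos
    rw [← mul_inv, ← mul_pow]
    gcongr
    nlinarith [min_le_left c 1, min_le_right c 1, sq_nonneg ‖p‖]
  refine (hbracket.const_mul (min c 1 ^ n)⁻¹).mono' (by fun_prop)
    (Filter.Eventually.of_forall fun p => ?_)
  rw [Real.norm_of_nonneg (by positivity)]
  exact hle p

end Integrability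

lemma intervalIntegral_sub_mul_two_div_add_pow_three {c A : ℝ} (hc : 0 < c) (hcA : 0 < c + A) :
    ∫ t in (0:ℝ)..A, (A - t) * (2 / (c + t) ^ 3) = A / c ^ 2 + 1 / (c + A) - 1 / c := by
  have hpos : ∀ t ∈ uIcc 0 A, 0 < c + t := by
    intro t ht
    rcases mem_uIcc.mp ht with h | h <;> linarith [h.1, h.2]
  -- `(A - t) f' t + f t` with `f t = (c + t)⁻¹` is an antiderivative of `(A - t) f'' t`
  have hderiv : ∀ t ∈ uIcc 0 A, HasDerivAt (fun t => (t - A) / (c + t) ^ 2 + (c + t)⁻¹)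
      ((A - t) * (2 / (c + t) ^ 3)) t := by
    intro t ht
    have hne : c + t ≠ 0 := (hpos t ht).ne'
    have hlin : HasDerivAt (fun t : ℝ => c + t) 1 t := (hasDerivAt_id t).const_add c
    refine ((((hasDerivAt_id t).sub_const A).fun_div (hlin.fun_pow 2)
      (pow_ne_zero 2 hne)).fun_add (hlin.fun_inv hne)).congr_deriv ?_
    simp only [id]
    field_simp
    ring
  have hcont : ContinuousOn (fun t => (A - t) * (2 / (c + t) ^ 3)) (uIcc 0 A) :=
    (continuousOn_const.sub continuousOn_id).mul <|
      continuousOn_const.div (by fun_prop) fun t ht => pow_ne_zero 3 (hpos t ht).ne'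
  rw [intervalIntegral.integral_eq_sub_of_hasDerivAt hderiv hcont.intervalIntegrable]
  field_simp
  ring

lemma intervalIntegral_integral_swap_of_norm_le {α : Type*} [MeasurableSpace α] {μ : Measure α}
    [SFinite μ] {a b : ℝ} {f : ℝ → α → ℝ}
    (hf : AEStronglyMeasurable (Function.uncurry f) ((volume.restrict (uIoc a b)).prod μ))
    {g : α → ℝ} (hg : Integrable g μ) (hfg : ∀ t ∈ uIoc a b, ∀ y, ‖f t y‖ ≤ g y) :
    ∫ t in a..b, ∫ y, f t y ∂μ = ∫ y, (∫ t in a..b, f t y) ∂μ := by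
  have hone : IntegrableOn (fun _ => (1 : ℝ)) (uIoc a b) :=
    integrableOn_const (by simp [Real.volume_uIoc])
  refine intervalIntegral_integral_swap ((hone.mul_prod hg).mono' hf ?_)
  rw [Measure.restrict_prod_eq_prod_univ, ae_restrict_iff' (measurableSet_uIoc.prod .univ)]
  exact Filter.Eventually.of_forall fun z hz => by
    simpa [Function.uncurry_def] using hfg z.1 hz.1 z.2

local notation "E4" => EuclideanSpace ℝ (Fin 4)

/-- Identity between the regularized integral and the double (Taylor-remainder)
integral: for fixed `a ∈ ℝ`, `m_r > 0`,
`∫_{ℝ⁴} [a²/(|p|²+m_r²)² + 1/(a²+|p|²+m_r²) − 1/(|p|²+m_r²)] dp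
  = ∫_0^{a²} dt (a²−t) ∫_{ℝ⁴} dp 2/(m_r²+t+|p|²)³`,
the inner integrand being `d²/dt² [1/(m_r²+t+|p|²)]`; moreover the inner
4-dimensional integral is finite for every `t ≥ 0`. -/
theorem regularized_integral_as_double_integral (a mr : ℝ) (hm : 0 < mr) :
    (∀ t : ℝ, 0 ≤ t →
      Integrable (fun p : EuclideanSpace ℝ (Fin 4) =>
        2 / (mr ^ 2 + t + ‖p‖ ^ 2) ^ 3)) ∧
    ∫ p : EuclideanSpace ℝ (Fin 4),
        (a ^ 2 / (‖p‖ ^ 2 + mr ^ 2) ^ 2 + 1 / (a ^ 2 + ‖p‖ ^ 2 + mr ^ 2)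
          - 1 / (‖p‖ ^ 2 + mr ^ 2)) =
      ∫ t in (0:ℝ)..a ^ 2, (a ^ 2 - t) *
        ∫ p : EuclideanSpace ℝ (Fin 4), 2 / (mr ^ 2 + t + ‖p‖ ^ 2) ^ 3 := by
  have hint (t : ℝ) (ht : 0 ≤ t) :
      Integrable (fun p : E4 => 2 / (mr ^ 2 + t + ‖p‖ ^ 2) ^ 3) := by
    simpa only [div_eq_mul_inv, one_mul] using
      (integrable_inv_const_add_norm_sq_pow (μ := volume) (E := E4)
        (by positivity : 0 < mr ^ 2 + t) (n := 3) (by simp)).const_mul 2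
  refine ⟨hint, ?_⟩
  have htaylor (p : E4) :
      a ^ 2 / (‖p‖ ^ 2 + mr ^ 2) ^ 2 + 1 / (a ^ 2 + ‖p‖ ^ 2 + mr ^ 2) - 1 / (‖p‖ ^ 2 + mr ^ 2) =
        ∫ t in (0:ℝ)..a ^ 2, (a ^ 2 - t) * (2 / (mr ^ 2 + t + ‖p‖ ^ 2) ^ 3) := by
    have h := intervalIntegral_sub_mul_two_div_add_pow_three (c := mr ^ 2 + ‖p‖ ^ 2)
      (A := a ^ 2) (by positivity) (by positivity)
    simp_rw [add_right_comm (mr ^ 2) (‖p‖ ^ 2)] at h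
    rw [h]
    ring
  simp_rw [integral_congr_ae (Filter.Eventually.of_forall htaylor), ← integral_const_mul]
  refine (intervalIntegral_integral_swap_of_norm_le (by fun_prop)
    ((hint 0 le_rfl).const_mul (a ^ 2)) fun t ht p => ?_).symm
  obtain ⟨ht0, htA⟩ : 0 < t ∧ t ≤ a ^ 2 := by rwa [uIoc_of_le (sq_nonneg a)] at ht
  rw [norm_mul, Real.norm_of_nonneg (by linarith), Real.norm_of_nonneg (by positivity), add_zero]
  gcongr <;> linarith
end
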